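/- Let M = L* + S* + N* where L, S*, N*, and an estimate L are n × n matrices, and suppose ‖L* − L‖∞ ≤ β. Set ζ = β + ‖N*‖∞ and S = P_ζ(M − L). Then supp(S) ⊆ supp(S*) and ‖S* − S‖∞ ≤ 2(β + ‖N*‖∞). -/

import Mathlib

open Matrix

noncomputable def specNorm {m n : Type*} [Fintype m] [Fintype n] [DecidableEq n]
    (A : Matrix m n ℝ) : ℝ :=
  ‖LinearMap.toContinuousLinearMap (Matrix.toEuclideanLin A)‖

noncomputable def infNorm {m n : Type*} [Fintype m] [Fintype n] (A : Matrix m n ℝ) : ℝ :=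
  ⨆ i, ⨆ j, |A i j|

noncomputable def nnzRow {m n : Type*} [Fintype n] (A : Matrix m n ℝ) (i : m) : ℕ :=
  (Finset.univ.filter fun j => A i j ≠ 0).card

noncomputable def nnzCol {m n : Type*} [Fintype m] (A : Matrix m n ℝ) (j : n) : ℕ :=
  (Finset.univ.filter fun i => A i j ≠ 0).card

noncomputable def hardThresh {m n : Type*} (a : ℝ) (A : Matrix m n ℝ) : Matrix m n ℝ :=
  Matrix.of fun i j => if a < |A i j| then A i j else 0

noncomputable def sigmaMin {d n : Type*} [Fintype d] [Fintype n] [DecidableEq d]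
    (F : Matrix d n ℝ) : ℝ :=
  sInf ((fun y : EuclideanSpace ℝ d => ‖Matrix.toEuclideanLin Fᵀ y‖) '' {y | ‖y‖ = 1})

noncomputable def pinv {d n : Type*} [Fintype d] [Fintype n] [DecidableEq d]
    (F : Matrix d n ℝ) : Matrix n d ℝ :=
  Fᵀ * (F * Fᵀ)⁻¹

def IsTruncatedEigen {d : ℕ} (r : ℕ) (A B : Matrix (Fin d) (Fin d) ℝ) : Prop :=
  ∃ (Q : Matrix (Fin d) (Fin r) ℝ) (Λ : Fin r → ℝ)
    (Qp : Matrix (Fin d) (Fin (d - r)) ℝ) (Λp : Fin (d - r) → ℝ),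
    Qᵀ * Q = 1 ∧ Qpᵀ * Qp = 1 ∧ Qᵀ * Qp = 0 ∧
    A = Q * Matrix.diagonal Λ * Qᵀ + Qp * Matrix.diagonal Λp * Qpᵀ ∧
    B = Q * Matrix.diagonal Λ * Qᵀ ∧
    ∀ i j, |Λp j| ≤ |Λ i|

def symEmb {n₁ n₂ : Type*} (M : Matrix n₁ n₂ ℝ) : Matrix (n₁ ⊕ n₂) (n₁ ⊕ n₂) ℝ :=
  Matrix.fromBlocks 0 M Mᵀ 0

section InfNorm

variable {m n : Type*} [Fintype m] [Fintype n]

lemma infNorm_nonneg (A : Matrix m n ℝ) : 0 ≤ infNorm A :=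
  Real.iSup_nonneg fun _ => Real.iSup_nonneg fun _ => abs_nonneg _

lemma abs_le_infNorm (A : Matrix m n ℝ) (i : m) (j : n) : |A i j| ≤ infNorm A :=
  (le_ciSup (f := fun j => |A i j|) (Set.finite_range _).bddAbove j).trans
    (le_ciSup (f := fun i => ⨆ j, |A i j|) (Set.finite_range _).bddAbove i)

lemma infNorm_le_of_abs_le {A : Matrix m n ℝ} {c : ℝ} (hc : 0 ≤ c) (h : ∀ i j, |A i j| ≤ c) :
    infNorm A ≤ c :=
  Real.iSup_le (fun i => Real.iSup_le (h i) hc) hc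

lemma infNorm_add_le (A B : Matrix m n ℝ) : infNorm (A + B) ≤ infNorm A + infNorm B :=
  infNorm_le_of_abs_le (add_nonneg (infNorm_nonneg A) (infNorm_nonneg B)) fun i j =>
    (abs_add_le _ _).trans (add_le_add (abs_le_infNorm A i j) (abs_le_infNorm B i j))

end InfNorm

section HardThresh

variable {m n : Type*}

@[simp]
lemma hardThresh_apply (a : ℝ) (A : Matrix m n ℝ) (i : m) (j : n) :
    hardThresh a A i j = if a < |A i j| then A i j else 0 :=
  rfl

lemma hardThresh_apply_eq_zero {a : ℝ} {A : Matrix m n ℝ} {i : m} {j : n} (h : |A i j| ≤ a) :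
    hardThresh a A i j = 0 := by
  simp [not_lt.mpr h]

/-- A kept entry is within `a` of `x`; a killed one has `|x| ≤ |y - x| + |y| ≤ 2 * a`. -/
lemma abs_sub_ite_abs_lt_le {a x y : ℝ} (h : |y - x| ≤ a) :
    |x - if a < |y| then y else 0| ≤ 2 * a := by
  have ha : 0 ≤ a := (abs_nonneg _).trans h
  split_ifs with hy
  · rw [abs_sub_comm]; linarith
  · have := abs_sub_abs_le_abs_sub x y
    rw [abs_sub_comm x y] at this
    rw [sub_zero]; linarith [not_lt.mp hy]

theorem hardThresh_recovery [Fintype m] [Fintype n] {a : ℝ} {S B : Matrix m n ℝ}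
    (h : infNorm (B - S) ≤ a) :
    (∀ i j, S i j = 0 → hardThresh a B i j = 0) ∧ infNorm (S - hardThresh a B) ≤ 2 * a := by
  have hentry : ∀ i j, |B i j - S i j| ≤ a := fun i j => (abs_le_infNorm (B - S) i j).trans h
  refine ⟨fun i j hS => hardThresh_apply_eq_zero ?_, ?_⟩
  · simpa [hS] using hentry i j
  · have ha : 0 ≤ a := (infNorm_nonneg _).trans h
    exact infNorm_le_of_abs_le (by linarith) fun i j => abs_sub_ite_abs_lt_le (hentry i j)

end HardThresh

theorem stmt7_general {n : ℕ} (M Lstar Sstar Nstar L : Matrix (Fin n) (Fin n) ℝ) (β : ℝ)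
    (hM : M = Lstar + Sstar + Nstar) (herr : infNorm (Lstar - L) ≤ β) :
    (∀ i j, Sstar i j = 0 → hardThresh (β + infNorm Nstar) (M - L) i j = 0) ∧
      infNorm (Sstar - hardThresh (β + infNorm Nstar) (M - L)) ≤
        2 * (β + infNorm Nstar) := by
  apply hardThresh_recovery
  have hres : M - L - Sstar = (Lstar - L) + Nstar := by rw [hM]; abel
  rw [hres]
  exact (infNorm_add_le _ _).trans (by linarith)

theorem stmt7 {n : ℕ} (M Lstar Sstar Nstar L : Matrix (Fin n) (Fin n) ℝ) (β : ℝ)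
    (hβ : 0 < β) (hM : M = Lstar + Sstar + Nstar) (herr : infNorm (Lstar - L) ≤ β) :
    (∀ i j, Sstar i j = 0 → hardThresh (β + infNorm Nstar) (M - L) i j = 0) ∧
      infNorm (Sstar - hardThresh (β + infNorm Nstar) (M - L)) ≤
        2 * (β + infNorm Nstar) :=
  stmt7_general M Lstar Sstar Nstar L β hM herr
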